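/- arXiv:1811.01997 — 2 statements merged into one kernel-verified Lean document; each statement's English description precedes it below -/
import Mathlib

section
/- In a simple graph, if C is a set of vertices each at distance at most 1 from a common vertex c (a cluster with center c), then any shortest path between two vertices of the graph contains at most 3 vertices of C. -/
private lemma aux_dist_getVert_le {V : Type*} (G : SimpleGraph V) (hG : G.Connected)
    {x y : V} (p : G.Walk x y) :
    ∀ i j : ℕ, i ≤ j → G.dist (p.getVert i) (p.getVert j) ≤ j - i := by
  intro i j
  induction j with
  | zero =>
    intro h
    obtain rfl : i = 0 := Nat.le_zero.mp h
    simp [SimpleGraph.dist_self]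
  | succ j ih =>
    intro h
    rcases Nat.lt_or_ge i (j + 1) with h' | h'
    · have hij : i ≤ j := Nat.lt_succ_iff.mp h'
      have hstep : G.dist (p.getVert j) (p.getVert (j + 1)) ≤ 1 := by
        by_cases hj : j < p.length
        · exact SimpleGraph.dist_le (p.adj_getVert_succ hj).toWalk
        · push_neg at hj
          have h1 : p.getVert j = y := p.getVert_of_length_le hj
          have h2 : p.getVert (j + 1) = y := p.getVert_of_length_le (by omega)
          rw [h1, h2, SimpleGraph.dist_self]
          omega
      have htri := hG.dist_triangle (u := p.getVert i) (v := p.getVert j)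
          (w := p.getVert (j + 1))
      have := ih hij
      omega
    · have : i = j + 1 := le_antisymm h h'
      subst this
      simp [SimpleGraph.dist_self]

private lemma aux_geodesic_lb {V : Type*} (G : SimpleGraph V) (hG : G.Connected)
    {x y : V} (p : G.Walk x y) (hsp : p.length = G.dist x y)
    {i j : ℕ} (hij : i ≤ j) (hj : j ≤ p.length) :
    j - i ≤ G.dist (p.getVert i) (p.getVert j) := by
  have h1 : G.dist x (p.getVert i) ≤ i := by
    simpa using aux_dist_getVert_le G hG p 0 i (Nat.zero_le _)
  have h2 : G.dist (p.getVert j) y ≤ p.length - j := by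
    simpa [p.getVert_length] using aux_dist_getVert_le G hG p j p.length hj
  have h3 : G.dist x y ≤ G.dist x (p.getVert i) + G.dist (p.getVert i) (p.getVert j)
      + G.dist (p.getVert j) y := by
    calc G.dist x y ≤ G.dist x (p.getVert j) + G.dist (p.getVert j) y :=
          hG.dist_triangle
      _ ≤ (G.dist x (p.getVert i) + G.dist (p.getVert i) (p.getVert j))
          + G.dist (p.getVert j) y := by
          exact Nat.add_le_add_right hG.dist_triangle _
  omega

/-- **A shortest path meets a cluster in at most 3 vertices.**
If `C` is a set of vertices each adjacent to a common center `c`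
(a cluster), then any shortest path of `G` contains at most `3`
vertices of `C`. -/
theorem shortest_path_meets_cluster {V : Type*} [Fintype V] [DecidableEq V]
    (G : SimpleGraph V) (hG : G.Connected)
    (c : V) (C : Finset V) (hC : ∀ v ∈ C, G.Adj c v)
    (x y : V) (p : G.Walk x y) (hp : p.IsPath) (hsp : p.length = G.dist x y) :
    (p.support.filter (fun v => v ∈ C)).length ≤ 3 := by
  classical
  set T : Finset V := p.support.toFinset.filter (fun v => v ∈ C) with hT
  have hnodup : p.support.Nodup := hp.support_nodup
  have hlen : (p.support.filter (fun v => v ∈ C)).length = T.card := by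
    rw [hT, ← List.toFinset_card_of_nodup (hnodup.filter (fun v => decide (v ∈ C)))]
    congr 1
    rw [List.toFinset_filter]
    simp
  rw [hlen]
  rcases T.eq_empty_or_nonempty with hTe | hTn
  · simp [hTe]
  -- index function
  set f : V → ℕ := fun v =>
    if h : v ∈ p.support then
      (SimpleGraph.Walk.mem_support_iff_exists_getVert.mp h).choose
    else 0 with hfdef
  have hf : ∀ v ∈ T, p.getVert (f v) = v ∧ f v ≤ p.length := by
    intro v hv
    have hvs : v ∈ p.support := by
      rw [hT, Finset.mem_filter, List.mem_toFinset] at hv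
      exact hv.1
    simp only [hfdef, dif_pos hvs]
    exact (SimpleGraph.Walk.mem_support_iff_exists_getVert.mp hvs).choose_spec
  have hCmem : ∀ v ∈ T, v ∈ C := by
    intro v hv
    rw [hT, Finset.mem_filter] at hv
    exact hv.2
  have hdist2 : ∀ v ∈ T, ∀ w ∈ T, G.dist v w ≤ 2 := by
    intro v hv w hw
    simpa using G.dist_le
      (SimpleGraph.Walk.cons (hC v (hCmem v hv)).symm (hC w (hCmem w hw)).toWalk)
  have hwin : ∀ v ∈ T, ∀ w ∈ T, f v ≤ f w → f w - f v ≤ 2 := by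
    intro v hv w hw hle
    have hgeo := aux_geodesic_lb G hG p hsp hle (hf w hw).2
    rw [(hf v hv).1, (hf w hw).1] at hgeo
    exact le_trans hgeo (hdist2 v hv w hw)
  have hinj : Set.InjOn f T := by
    intro v hv w hw hvw
    have h1 := (hf v hv).1
    have h2 := (hf w hw).1
    rw [← h1, ← h2, hvw]
  have hcard : T.card = (T.image f).card := (Finset.card_image_of_injOn hinj).symm
  rw [hcard]
  have hne : (T.image f).Nonempty := hTn.image f
  set m := (T.image f).min' hne with hm
  obtain ⟨v₀, hv₀, hfv₀⟩ := Finset.mem_image.mp ((T.image f).min'_mem hne)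
  have hsub : T.image f ⊆ Finset.Icc m (m + 2) := by
    intro n hn
    obtain ⟨w, hw, rfl⟩ := Finset.mem_image.mp hn
    have h1 : m ≤ f w := (T.image f).min'_le _ hn
    have h2 : f w - f v₀ ≤ 2 := hwin v₀ hv₀ w hw (by rw [hfv₀]; exact h1)
    rw [Finset.mem_Icc]
    omega
  calc (T.image f).card ≤ (Finset.Icc m (m + 2)).card := Finset.card_le_card hsub
    _ = 3 := by rw [Nat.card_Icc]; omega
end

section
/- In the weighted distributed Bellman–Ford algorithm, the index ℓ_v^{(r)}(d_s, s, w_s) of a triplet (d_s, s, w_s) within the lexicographically sorted proximity list of node v is non-decreasing in the round number r: triplets are only removed from the list when replaced by a lexicographically smaller triplet for the same source, so the number of triplets lexicographically smaller than a fixed triplet never decreases. -/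
/-!
Send each triplet of the old list that lies below `t` to itself if it survives the round, and
otherwise to the triplet replacing it; by transitivity the image still lies below `t`. The map
preserves sources, and the old list has at most one triplet per source, so the map is injective.
-/

/-- Lexicographic order on triplets `(d, s, w)`: first by distance `d`,
then by source `s`, then by weight `w`. -/
abbrev TripLt (a b : ℕ × ℕ × ℕ) : Prop :=
  a.1 < b.1 ∨ (a.1 = b.1 ∧ (a.2.1 < b.2.1 ∨ (a.2.1 = b.2.1 ∧ a.2.2 < b.2.2)))

open Finset

instance : IsTrans (ℕ × ℕ × ℕ) TripLt where
  trans := by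
    rintro ⟨a₁, a₂, a₃⟩ ⟨b₁, b₂, b₃⟩ ⟨c₁, c₂, c₃⟩ hab hbc
    dsimp only [TripLt] at *
    omega

theorem card_filter_rel_le_of_replaced {α β : Type*} {r : α → α → Prop} [IsTrans α r]
    (key : α → β) {s s' : Finset α} (hkey : Set.InjOn key s)
    (hreplace : ∀ a ∈ s, a ∉ s' → ∃ b ∈ s', key b = key a ∧ r b a)
    (t : α) [DecidablePred (r · t)] :
    #{u ∈ s | r u t} ≤ #{u ∈ s' | r u t} := by
  have hmap : ∀ a ∈ s, ∃ b ∈ s', key b = key a ∧ (r a t → r b t) := by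
    intro a ha
    by_cases ha' : a ∈ s'
    · exact ⟨a, ha', rfl, id⟩
    · obtain ⟨b, hb, hkb, hba⟩ := hreplace a ha ha'
      exact ⟨b, hb, hkb, trans_of r hba⟩
  choose! f hfs hfkey hflt using hmap
  refine card_le_card_of_injOn f (fun a ha => ?_) (fun a ha b hb hab => ?_)
  · simp only [mem_coe, mem_filter] at ha ⊢
    exact ⟨hfs a ha.1, hflt a ha.1 ha.2⟩
  · simp only [mem_coe, mem_filter] at ha hb
    exact hkey ha.1 hb.1 (by rw [← hfkey a ha.1, ← hfkey b hb.1, hab])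

/-- **Positions in the proximity list are non-decreasing.**  `L r` is the
proximity list of a node at the start of round `r`, containing at most one
triplet per source, and a triplet may be removed in a round only if a
lexicographically smaller triplet with the same source is simultaneously
inserted.  Then, for every fixed triplet `t`, the number of triplets of the
list lexicographically smaller than `t` never decreases, i.e. the index of
`t` in the sorted list is non-decreasing with `r`. -/
theorem position_nondecreasing
    (L : ℕ → Finset (ℕ × ℕ × ℕ))
    (hsource : ∀ r, ∀ a ∈ L r, ∀ b ∈ L r, a.2.1 = b.2.1 → a = b)
    (hremove : ∀ r, ∀ a ∈ L r, a ∉ L (r + 1) →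
      ∃ a' ∈ L (r + 1), a'.2.1 = a.2.1 ∧ TripLt a' a)
    (t : ℕ × ℕ × ℕ) (r : ℕ) :
    ((L r).filter (fun u => TripLt u t)).card ≤
      ((L (r + 1)).filter (fun u => TripLt u t)).card :=
  card_filter_rel_le_of_replaced (r := TripLt) (fun a => a.2.1)
    (fun a ha b hb => hsource r a ha b hb) (hremove r) t
end
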